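/- arXiv:1501.02407 — 2 statements merged into one kernel-verified Lean document; each statement's English description precedes it below -/
import Mathlib

section
/- For n >= 0 and angles theta, mu in [0, pi], the product formula L_n(cos theta) L_n(cos mu) = (1/pi) * integral from 0 to pi of L_n(cos theta * cos mu + sin theta * sin mu * cos s) ds holds. -/
/-!
Write `z = x y + c cos s` with `c² = (1 - x²)(1 - y²)`; for `x = cos θ`, `y = cos μ` one may take
`c = sin θ sin μ`. Integrating Bonnet's recursion in `z` over `s ∈ [0, π]` leaves the moment
`∫ cos s · P_{n+1}(z) ds`. Integration by parts turns it into `c ∫ sin² s · P'_{n+1}(z) ds`, and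
`c² sin² s = (1 - z²) - x² - y² + 2 x y z` is a polynomial in `z`, so the identities
`(1 - z²) P'_{n+1} = (n + 1)(P_n - z P_{n+1})` and `z P'_{n+1} = P'_n + (n + 1) P_{n+1}` express the
moment through the integrals of `P_n, P_{n+1}, P'_n, P'_{n+1}`. A two-step induction therefore
proves simultaneously `∫ P_n(z) = π P_n(x) P_n(y)` and `∫ P'_n(z) = π ∑ (2k + 1) P_k(x) P_k(y)`,
the sum mirroring `P'_n = ∑ (2k + 1) P_k`; the step closes by a Christoffel–Darboux-type identity
for it.
-/

open Real

/-- The Legendre polynomials, defined by Bonnet's recursion. -/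
noncomputable def legendre : ℕ → ℝ → ℝ
  | 0 => fun _ => 1
  | 1 => fun x => x
  | (n+2) => fun x =>
      (((2*n+3) : ℝ) * x * legendre (n+1) x - ((n+1) : ℝ) * legendre n x) / ((n+2) : ℝ)

noncomputable def legendreDeriv : ℕ → ℝ → ℝ
  | 0 => fun _ => 0
  | (n+1) => fun x => x * legendreDeriv n x + (n + 1) * legendre n x

lemma legendre_add_two (n : ℕ) (x : ℝ) :
    (n + 2) * legendre (n + 2) x
      = (2 * n + 3) * x * legendre (n + 1) x - (n + 1) * legendre n x := by
  rw [legendre]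
  field_simp

lemma legendreDeriv_succ (n : ℕ) (x : ℝ) :
    legendreDeriv (n + 1) x = x * legendreDeriv n x + (n + 1) * legendre n x := rfl

lemma mul_legendreDeriv_succ (n : ℕ) (x : ℝ) :
    x * legendreDeriv (n + 1) x = legendreDeriv n x + (n + 1) * legendre (n + 1) x := by
  induction n with
  | zero => simp [legendreDeriv, legendre]
  | succ n ih =>
    rw [legendreDeriv_succ (n + 1)]
    push_cast
    linear_combination x * ih - legendreDeriv_succ n x - legendre_add_two n x

lemma legendreDeriv_add_two (n : ℕ) (x : ℝ) :
    legendreDeriv (n + 2) x = legendreDeriv n x + (2 * n + 3) * legendre (n + 1) x := by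
  rw [legendreDeriv_succ (n + 1)]
  push_cast
  linear_combination mul_legendreDeriv_succ n x

lemma one_sub_sq_mul_legendreDeriv_succ (n : ℕ) (t : ℝ) :
    (1 - t ^ 2) * legendreDeriv (n + 1) t = (n + 1) * (legendre n t - t * legendre (n + 1) t) := by
  linear_combination legendreDeriv_succ n t - t * mul_legendreDeriv_succ n t

lemma hasDerivAt_legendre (n : ℕ) (x : ℝ) :
    HasDerivAt (legendre n) (legendreDeriv n x) x := by
  induction n using Nat.twoStepInduction generalizing x with
  | zero => exact hasDerivAt_const x 1
  | one => simpa [legendre, legendreDeriv] using hasDerivAt_id' x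
  | more n ih₀ ih₁ =>
    have hP : legendre (n + 2) = fun t ↦
        ((2 * n + 3) * (t * legendre (n + 1) t) - (n + 1) * legendre n t) / (n + 2) := by
      funext t; rw [legendre]; push_cast; ring
    rw [hP]
    refine ((((hasDerivAt_id' x).mul (ih₁ x)).const_mul _).sub
      ((ih₀ x).const_mul _)).div_const _ |>.congr_deriv ?_
    rw [legendreDeriv_succ (n + 1)]
    field_simp
    push_cast
    linear_combination (n + 1 : ℝ) * mul_legendreDeriv_succ n x

@[fun_prop]
lemma continuous_legendre (n : ℕ) : Continuous (legendre n) :=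
  continuous_iff_continuousAt.2 fun x ↦ (hasDerivAt_legendre n x).continuousAt

@[fun_prop]
lemma continuous_legendreDeriv (n : ℕ) : Continuous (legendreDeriv n) := by
  induction n with
  | zero => exact continuous_const
  | succ n ih => simp only [legendreDeriv]; fun_prop

-- `∑ (2k + 1) P_k(x) P_k(y)` over `k < n` with `n - k` odd.
noncomputable def legendreDerivKernel : ℕ → ℝ → ℝ → ℝ
  | 0 => fun _ _ => 0
  | 1 => fun _ _ => 1
  | (n + 2) => fun x y ↦
      legendreDerivKernel n x y + (2 * n + 3) * legendre (n + 1) x * legendre (n + 1) y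

lemma legendreDerivKernel_add_two (n : ℕ) (x y : ℝ) :
    legendreDerivKernel (n + 2) x y
      = legendreDerivKernel n x y + (2 * n + 3) * legendre (n + 1) x * legendre (n + 1) y := rfl

lemma legendreDerivKernel_christoffel_darboux (n : ℕ) (x y : ℝ) :
    (x ^ 2 + y ^ 2) * legendreDerivKernel (n + 1) x y - 2 * x * y * legendreDerivKernel n x y
      = (n + 1) * (x * legendre (n + 1) x * legendre n y
          + y * legendre n x * legendre (n + 1) y) := by
  induction n using Nat.twoStepInduction with
  | zero | one => simp only [legendreDerivKernel, legendre]; push_cast; ring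
  | more n ih₀ _ =>
    have hS : legendreDerivKernel (n + 3) x y = legendreDerivKernel (n + 1) x y
        + (2 * n + 5) * legendre (n + 2) x * legendre (n + 2) y := by
      rw [legendreDerivKernel_add_two]; push_cast; ring
    have hP (t : ℝ) : (n + 3) * legendre (n + 3) t
        = (2 * n + 5) * t * legendre (n + 2) t - (n + 2) * legendre (n + 1) t := by
      have := legendre_add_two (n + 1) t
      push_cast at this
      linear_combination this
    show (x ^ 2 + y ^ 2) * legendreDerivKernel (n + 3) x y
        - 2 * x * y * legendreDerivKernel (n + 2) x y
      = ((n + 2 : ℕ) + 1) * (x * legendre (n + 3) x * legendre (n + 2) y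
        + y * legendre (n + 2) x * legendre (n + 3) y)
    push_cast
    linear_combination (x ^ 2 + y ^ 2) * hS - 2 * x * y * legendreDerivKernel_add_two n x y + ih₀
      - x * legendre (n + 2) y * hP x - y * legendre (n + 2) x * hP y
      + x * legendre (n + 1) x * legendre_add_two n y
      + y * legendre (n + 1) y * legendre_add_two n x

open intervalIntegral in
lemma integral_cos_mul_comp_add_mul_cos {f f' : ℝ → ℝ} (hf : ∀ t, HasDerivAt f (f' t) t)
    (hf' : Continuous f') (a c : ℝ) :
    ∫ s in (0)..π, cos s * f (a + c * cos s)
      = c * ∫ s in (0)..π, sin s ^ 2 * f' (a + c * cos s) := by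
  have hv (s : ℝ) : HasDerivAt (fun s ↦ f (a + c * cos s)) (f' (a + c * cos s) * (c * -sin s)) s :=
    (hf _).comp s (((hasDerivAt_cos s).const_mul c).const_add a)
  have hfc : Continuous f := continuous_iff_continuousAt.2 fun t ↦ (hf t).continuousAt
  have := integral_mul_deriv_eq_deriv_mul (a := 0) (b := π) (fun s _ ↦ hasDerivAt_sin s)
    (fun s _ ↦ hv s) (continuous_cos.intervalIntegrable _ _)
    (by apply Continuous.intervalIntegrable; fun_prop)
  simp only [sin_zero, sin_pi, zero_mul, sub_zero, zero_sub] at this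
  rw [← neg_eq_iff_eq_neg.mpr this, ← integral_neg, ← integral_const_mul]
  congr 1 with s
  ring

section ProductFormula

variable {x y c : ℝ}

open intervalIntegral

lemma mul_integral_legendre_add_two (n : ℕ) :
    (n + 2) * ∫ s in (0)..π, legendre (n + 2) (x * y + c * cos s)
      = (2 * n + 3) * (x * y * ∫ s in (0)..π, legendre (n + 1) (x * y + c * cos s))
        + (2 * n + 3) * (c * ∫ s in (0)..π, cos s * legendre (n + 1) (x * y + c * cos s))
        - (n + 1) * ∫ s in (0)..π, legendre n (x * y + c * cos s) := by
  have h (s : ℝ) : (n + 2) * legendre (n + 2) (x * y + c * cos s)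
      = (2 * n + 3) * (x * y) * legendre (n + 1) (x * y + c * cos s)
        + (2 * n + 3) * c * (cos s * legendre (n + 1) (x * y + c * cos s))
        - (n + 1) * legendre n (x * y + c * cos s) := by
    linear_combination legendre_add_two n (x * y + c * cos s)
  rw [← integral_const_mul]
  simp (disch := apply Continuous.intervalIntegrable; fun_prop) only
    [h, integral_add, integral_sub, integral_const_mul]
  ring

lemma mul_integral_cos_mul_legendre_succ (hc : c ^ 2 = (1 - x ^ 2) * (1 - y ^ 2)) (n : ℕ) :
    (n + 2) * (c * ∫ s in (0)..π, cos s * legendre (n + 1) (x * y + c * cos s))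
      = (n + 1) * (∫ s in (0)..π, legendre n (x * y + c * cos s))
        + (n + 1) * (x * y) * (∫ s in (0)..π, legendre (n + 1) (x * y + c * cos s))
        + 2 * x * y * (∫ s in (0)..π, legendreDeriv n (x * y + c * cos s))
        - (x ^ 2 + y ^ 2) * ∫ s in (0)..π, legendreDeriv (n + 1) (x * y + c * cos s) := by
  have h (s : ℝ) : c ^ 2 * (sin s ^ 2 * legendreDeriv (n + 1) (x * y + c * cos s))
      = (n + 1) * legendre n (x * y + c * cos s)
        + (n + 1) * (x * y) * legendre (n + 1) (x * y + c * cos s)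
        - (n + 1) * c * (cos s * legendre (n + 1) (x * y + c * cos s))
        + 2 * x * y * legendreDeriv n (x * y + c * cos s)
        - (x ^ 2 + y ^ 2) * legendreDeriv (n + 1) (x * y + c * cos s) := by
    set t := x * y + c * cos s
    linear_combination (c ^ 2 * legendreDeriv (n + 1) t) * sin_sq s
      + legendreDeriv (n + 1) t * hc + one_sub_sq_mul_legendreDeriv_succ n t
      + 2 * x * y * mul_legendreDeriv_succ n t
  have hparts := integral_cos_mul_comp_add_mul_cos (hasDerivAt_legendre (n + 1))
    (continuous_legendreDeriv (n + 1)) (x * y) c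
  have hK : c * ∫ s in (0)..π, cos s * legendre (n + 1) (x * y + c * cos s)
      = ∫ s in (0)..π, c ^ 2 * (sin s ^ 2 * legendreDeriv (n + 1) (x * y + c * cos s)) := by
    rw [hparts, integral_const_mul, ← mul_assoc, sq]
  simp (disch := apply Continuous.intervalIntegrable; fun_prop) only
    [h, integral_add, integral_sub, integral_const_mul] at hK
  linear_combination hK

theorem integral_legendre_and_legendreDeriv (hc : c ^ 2 = (1 - x ^ 2) * (1 - y ^ 2)) (n : ℕ) :
    ∫ s in (0)..π, legendre n (x * y + c * cos s) = π * (legendre n x * legendre n y) ∧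
      ∫ s in (0)..π, legendreDeriv n (x * y + c * cos s) = π * legendreDerivKernel n x y := by
  induction n using Nat.twoStepInduction with
  | zero => simp [legendre, legendreDeriv, legendreDerivKernel]
  | one =>
    refine ⟨?_, by simp [legendre, legendreDeriv, legendreDerivKernel]⟩
    simp (disch := apply Continuous.intervalIntegrable; fun_prop) only
      [legendre, integral_add, integral_const_mul, integral_cos, integral_const, sin_pi, sin_zero,
        sub_zero, sub_self, smul_eq_mul, mul_zero, add_zero]
    ring
  | more n ih₀ ih₁ =>
    obtain ⟨hI₀, hJ₀⟩ := ih₀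
    obtain ⟨hI₁, hJ₁⟩ := ih₁
    have hJ₂ : ∫ s in (0)..π, legendreDeriv (n + 2) (x * y + c * cos s)
        = π * legendreDerivKernel (n + 2) x y := by
      simp (disch := apply Continuous.intervalIntegrable; fun_prop) only
        [legendreDeriv_add_two, integral_add, integral_const_mul, hJ₀, hI₁,
          legendreDerivKernel_add_two]
      ring
    refine ⟨?_, hJ₂⟩
    have hK := mul_integral_cos_mul_legendre_succ hc n
    have hI₂ := mul_integral_legendre_add_two (x := x) (y := y) (c := c) n
    rw [hI₀, hI₁, hJ₀, hJ₁] at hK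
    rw [hI₀, hI₁] at hI₂
    have hn : ((n : ℝ) + 2) ^ 2 ≠ 0 := by positivity
    refine mul_left_cancel₀ hn ?_
    linear_combination (n + 2 : ℝ) * hI₂ + (2 * n + 3) * hK
      - π * (2 * n + 3) * legendreDerivKernel_christoffel_darboux n x y
      - π * ((n + 2) * legendre (n + 2) y) * legendre_add_two n x
      - π * ((2 * n + 3) * x * legendre (n + 1) x - (n + 1) * legendre n x) * legendre_add_two n y

end ProductFormula

theorem legendre_product_formula_general (n : ℕ) (θ μ : ℝ) :
    legendre n (Real.cos θ) * legendre n (Real.cos μ)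
      = (1/π) * ∫ s in (0:ℝ)..π,
          legendre n (Real.cos θ * Real.cos μ + Real.sin θ * Real.sin μ * Real.cos s) := by
  have hc : (sin θ * sin μ) ^ 2 = (1 - cos θ ^ 2) * (1 - cos μ ^ 2) := by
    rw [mul_pow, sin_sq, sin_sq]
  rw [(integral_legendre_and_legendreDeriv hc n).1, one_div, inv_mul_cancel_left₀ pi_ne_zero]

theorem legendre_product_formula (n : ℕ) (θ μ : ℝ)
    (hθ : θ ∈ Set.Icc 0 π) (hμ : μ ∈ Set.Icc 0 π) :
    legendre n (Real.cos θ) * legendre n (Real.cos μ)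
      = (1/π) * ∫ s in (0:ℝ)..π,
          legendre n (Real.cos θ * Real.cos μ + Real.sin θ * Real.sin μ * Real.cos s) :=
  legendre_product_formula_general n θ μ
end

section
/- Let f be 2*pi-periodic, continuous on the closed strip {z : |Im z| <= alpha'} for every alpha' < alpha, analytic on the open strip {z : |Im z| < alpha}, and bounded by M there. Then for every positive integer N, |integral from 0 to 2*pi of f(t) dt - (2*pi/N) * sum_{k=1}^{N} f(2*pi*k/N)| <= 4*pi*M/(e^{alpha*N} - 1). -/
/-!
Extend `t ↦ f t` to the circle `ℝ / 2πℤ` and expand it in its Fourier series `∑ cₙ e^{int}`.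
Periodicity lets the contour of the coefficient integral be shifted to `Im z = β` for any
`|β| < α`, which gives `‖cₙ‖ ≤ M e^{-α|n|}`. Sampled at the `N` equispaced nodes, `e^{int}` sums
to `N` if `N ∣ n` and to `0` otherwise (aliasing), so the trapezoidal sum is `2π ∑ₘ c_{mN}` while
the integral is `2π c₀`. The error is therefore at most
`2π · 2 ∑_{m ≥ 1} M e^{-αNm} = 4πM/(e^{αN} - 1)`.
-/

open Real Complex MeasureTheory intervalIntegral Finset
open scoped Interval

lemma hasSum_mul_exp_neg_mul_succ {C a : ℝ} (ha : 0 < a) :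
    HasSum (fun n : ℕ => C * Real.exp (-a * (n + 1))) (C / (Real.exp a - 1)) := by
  have hgeom := (hasSum_geometric_of_lt_one (Real.exp_pos (-a)).le
    (Real.exp_lt_one_iff.2 (neg_lt_zero.2 ha))).mul_left (C * Real.exp (-a))
  rw [show C / (Real.exp a - 1) = C * Real.exp (-a) * (1 - Real.exp (-a))⁻¹ by
    rw [Real.exp_neg]; field_simp [(sub_pos.2 (Real.one_lt_exp_iff.2 ha)).ne'] ]
  refine hgeom.congr_fun fun n => ?_
  rw [← Real.exp_nat_mul, mul_assoc, ← Real.exp_add]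
  ring_nf

section IntGeometric

variable {E : Type*} [NormedAddCommGroup E] {g : ℤ → E} {C a : ℝ}

lemma norm_apply_succ_and_neg_succ_le (hg : ∀ m : ℤ, ‖g m‖ ≤ C * Real.exp (-a * |(m : ℝ)|))
    (n : ℕ) :
    ‖g (n + 1)‖ ≤ C * Real.exp (-a * (n + 1)) ∧ ‖g (-(n + 1))‖ ≤ C * Real.exp (-a * (n + 1)) := by
  have h1 := hg (n + 1)
  have h2 := hg (-(n + 1))
  push_cast at h1 h2
  rw [abs_neg, abs_of_nonneg (by positivity)] at h2
  rw [abs_of_nonneg (by positivity)] at h1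
  exact ⟨h1, h2⟩

lemma summable_of_norm_le_mul_exp_neg_abs [CompleteSpace E] (ha : 0 < a)
    (hg : ∀ m : ℤ, ‖g m‖ ≤ C * Real.exp (-a * |(m : ℝ)|)) : Summable g :=
  have hsum := (hasSum_mul_exp_neg_mul_succ (C := C) ha).summable
  .of_add_one_of_neg_add_one
    (hsum.of_norm_bounded fun n => (norm_apply_succ_and_neg_succ_le hg n).1)
    (hsum.of_norm_bounded fun n => (norm_apply_succ_and_neg_succ_le hg n).2)

lemma norm_tsum_sub_apply_zero_le [CompleteSpace E] (ha : 0 < a)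
    (hg : ∀ m : ℤ, ‖g m‖ ≤ C * Real.exp (-a * |(m : ℝ)|)) :
    ‖∑' m, g m - g 0‖ ≤ 2 * C / (Real.exp a - 1) := by
  have hsum := hasSum_mul_exp_neg_mul_succ (C := C) ha
  have hpos := fun n => (norm_apply_succ_and_neg_succ_le hg n).1
  have hneg := fun n => (norm_apply_succ_and_neg_succ_le hg n).2
  rw [tsum_of_add_one_of_neg_add_one (hsum.summable.of_norm_bounded hpos)
    (hsum.summable.of_norm_bounded hneg), add_sub_right_comm, add_sub_cancel_right, two_mul,
    add_div]
  exact (norm_add_le _ _).trans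
    (add_le_add (tsum_of_norm_bounded hsum hpos) (tsum_of_norm_bounded hsum hneg))

end IntGeometric

lemma integral_add_mul_I_eq_of_periodic {E : Type*} [NormedAddCommGroup E] [NormedSpace ℂ E]
    [CompleteSpace E] {F : ℂ → E} {T β : ℝ} (hper : ∀ z, F (z + T) = F z)
    (hF : DifferentiableOn ℂ F ([[0, T]] ×ℂ [[0, β]])) :
    ∫ x : ℝ in 0..T, F (x + β * I) = ∫ x : ℝ in 0..T, F x := by
  have hrect := integral_boundary_rect_eq_zero_of_differentiableOn F 0 (T + β * I)
    (by simpa using hF)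
  have hvert : ∀ y : ℝ, F (T + y * I) = F (y * I) := fun y => by rw [add_comm, hper]
  simp only [zero_re, zero_im, add_re, ofReal_re, mul_re, I_re, I_im, ofReal_im, add_im,
    mul_im, mul_zero, sub_zero, add_zero, mul_one, zero_add, ofReal_zero, zero_mul, hvert,
    add_sub_cancel_right, sub_eq_zero] at hrect
  exact hrect.symm

instance : Fact (0 < 2 * π) := ⟨Real.two_pi_pos⟩

section Strip

variable {f : ℂ → ℂ} {α M : ℝ}

lemma norm_integral_exp_mul_le_of_abs_lt (hper : ∀ z, f (z + 2 * π) = f z)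
    (hanal : DifferentiableOn ℂ f {z | |z.im| < α}) (hbound : ∀ z, |z.im| < α → ‖f z‖ ≤ M)
    (n : ℤ) {β : ℝ} (hβ : |β| < α) :
    ‖∫ x : ℝ in 0..2 * π, exp (-n * I * x) * f x‖ ≤ 2 * π * M * Real.exp (n * β) := by
  have hper' : ∀ z, exp (-n * I * (z + (2 * π : ℝ))) * f (z + (2 * π : ℝ)) =
      exp (-n * I * z) * f z := fun z => by
    rw [ofReal_mul, ofReal_ofNat, hper, mul_add, Complex.exp_add,
      show -n * I * (2 * π) = (-n : ℤ) * (2 * π * I) by push_cast; ring,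
      exp_int_mul_two_pi_mul_I, mul_one]
  have hdiff : DifferentiableOn ℂ (fun z => exp (-n * I * z) * f z)
      ([[0, 2 * π]] ×ℂ [[0, β]]) := by
    refine (Differentiable.differentiableOn (by fun_prop)).mul (hanal.mono fun z hz => ?_)
    have him : z.im ∈ [[0, β]] := hz.2
    rw [Set.mem_uIcc] at him
    exact (abs_le.2 (by rcases him with h | h <;> constructor <;>
      linarith [neg_abs_le β, le_abs_self β])).trans_lt hβ
  rw [← integral_add_mul_I_eq_of_periodic hper' hdiff]
  calc _ ≤ Real.exp (n * β) * M * |2 * π - 0| := by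
        refine norm_integral_le_of_norm_le_const fun x _ => ?_
        rw [norm_mul, Complex.norm_exp]
        gcongr
        · exact le_of_eq (by simp)
        · exact hbound _ (by simpa using hβ)
    _ = 2 * π * M * Real.exp (n * β) := by
        rw [sub_zero, abs_of_pos Real.two_pi_pos]; ring

lemma norm_integral_exp_mul_le_of_strip (hα : 0 < α) (hper : ∀ z, f (z + 2 * π) = f z)
    (hanal : DifferentiableOn ℂ f {z | |z.im| < α}) (hbound : ∀ z, |z.im| < α → ‖f z‖ ≤ M)
    (n : ℤ) :
    ‖∫ x : ℝ in 0..2 * π, exp (-n * I * x) * f x‖ ≤ 2 * π * M * Real.exp (-α * |(n : ℝ)|) := by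
  have hclosed : IsClosed {β : ℝ | ‖∫ x : ℝ in 0..2 * π, exp (-n * I * x) * f x‖ ≤
      2 * π * M * Real.exp (n * β)} :=
    isClosed_le continuous_const (by fun_prop)
  have hIcc : Set.Icc (-α) α ⊆ {β : ℝ | ‖∫ x : ℝ in 0..2 * π, exp (-n * I * x) * f x‖ ≤
      2 * π * M * Real.exp (n * β)} := by
    rw [← closure_Ioo (by linarith), hclosed.closure_subset_iff]
    exact fun β hβ => norm_integral_exp_mul_le_of_abs_lt hper hanal hbound n (abs_lt.2 hβ)
  rcases le_total 0 (n : ℝ) with hn | hn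
  · simpa [abs_of_nonneg hn, mul_comm] using hIcc ⟨le_rfl, by linarith⟩
  · simpa [abs_of_nonpos hn, mul_comm] using hIcc ⟨by linarith, le_rfl⟩

lemma norm_fourierCoeff_le_of_strip (hα : 0 < α) (hper : ∀ z, f (z + 2 * π) = f z)
    (hanal : DifferentiableOn ℂ f {z | |z.im| < α}) (hbound : ∀ z, |z.im| < α → ‖f z‖ ≤ M)
    {G : AddCircle (2 * π) → ℂ} (hG : ∀ x : ℝ, G x = f x) (n : ℤ) :
    ‖fourierCoeff G n‖ ≤ M * Real.exp (-α * |(n : ℝ)|) := by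
  have hcoeff : fourierCoeff G n = (2 * π)⁻¹ • ∫ x : ℝ in 0..2 * π, exp (-n * I * x) * f x := by
    rw [fourierCoeff_eq_intervalIntegral G n 0, zero_add, one_div]
    congr 1
    refine integral_congr fun x _ => ?_
    rw [hG, fourier_coe_apply, smul_eq_mul]
    congr 2
    push_cast
    field_simp
  rw [hcoeff, norm_smul, norm_inv, Real.norm_of_nonneg Real.two_pi_pos.le,
    inv_mul_le_iff₀ Real.two_pi_pos, ← mul_assoc]
  exact norm_integral_exp_mul_le_of_strip hα hper hanal hbound n

end Strip

lemma sum_range_pow_succ_of_pow_eq_one {R : Type*} [Field R] [DecidableEq R] {ζ : R} {N : ℕ}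
    (hζ : ζ ^ N = 1) : ∑ k ∈ range N, ζ ^ (k + 1) = if ζ = 1 then (N : R) else 0 := by
  split_ifs with h
  · simp [h]
  · simp_rw [pow_succ, ← sum_mul, geom_sum_eq h, hζ, sub_self, zero_div, zero_mul]

lemma sum_fourier_equispaced {T : ℝ} (hT : T ≠ 0) {N : ℕ} (hN : 0 < N) (i : ℤ) :
    ∑ k ∈ range N, fourier i ((T * (k + 1) / N : ℝ) : AddCircle T) =
      if (N : ℤ) ∣ i then (N : ℂ) else 0 := by
  set ζ := Complex.exp (2 * π * I * i / N)
  have hN' : (N : ℂ) ≠ 0 := Nat.cast_ne_zero.2 hN.ne'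
  have hT' : (T : ℂ) ≠ 0 := ofReal_ne_zero.2 hT
  have hnode : ∀ k : ℕ, fourier i ((T * (k + 1) / N : ℝ) : AddCircle T) = ζ ^ (k + 1) := by
    intro k
    rw [fourier_coe_apply, ← Complex.exp_nat_mul]
    congr 1
    push_cast
    field_simp
  have hζN : ζ ^ N = 1 := by
    rw [← Complex.exp_nat_mul, show (N : ℂ) * (2 * π * I * i / N) = i * (2 * π * I) by
      field_simp]
    exact exp_int_mul_two_pi_mul_I i
  have hζ : ζ = 1 ↔ (N : ℤ) ∣ i := by
    rw [Complex.exp_eq_one_iff]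
    constructor
    · rintro ⟨m, hm⟩
      rw [div_eq_iff hN', show (m : ℂ) * (2 * π * I) * N = 2 * π * I * (N * m) by ring,
        mul_right_inj' two_pi_I_ne_zero] at hm
      exact ⟨m, by exact_mod_cast hm⟩
    · rintro ⟨m, rfl⟩
      exact ⟨m, by push_cast; field_simp⟩
  simp_rw [hnode, sum_range_pow_succ_of_pow_eq_one hζN, hζ]

lemma hasSum_fourierCoeff_mul_natCast {T : ℝ} [hT : Fact (0 < T)] (G : C(AddCircle T, ℂ))
    (hG : Summable (fourierCoeff G)) {N : ℕ} (hN : 0 < N) :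
    HasSum (fun m : ℤ => fourierCoeff G (m * N))
      ((N : ℂ)⁻¹ * ∑ k ∈ range N, G ((T * (k + 1) / N : ℝ) : AddCircle T)) := by
  have hnodes : HasSum (fun i => fourierCoeff G i * if (N : ℤ) ∣ i then (N : ℂ) else 0)
      (∑ k ∈ range N, G ((T * (k + 1) / N : ℝ) : AddCircle T)) := by
    convert hasSum_sum (s := range N) fun (k : ℕ) _ =>
      has_pointwise_sum_fourier_series_of_summable hG ((T * (k + 1) / N : ℝ) : AddCircle T)
      using 2 with i
    simp_rw [smul_eq_mul, ← mul_sum, sum_fourier_equispaced hT.out.ne' hN]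
  have hmul : Function.Injective fun m : ℤ => m * N :=
    mul_left_injective₀ (Int.natCast_ne_zero.2 hN.ne')
  have hsupp : ∀ i ∉ Set.range fun m : ℤ => m * N,
      (fourierCoeff G i * if (N : ℤ) ∣ i then (N : ℂ) else 0) = 0 := by
    rintro i hi
    rw [if_neg fun ⟨m, hm⟩ => hi ⟨m, by rw [hm, mul_comm]⟩, mul_zero]
  have := ((hmul.hasSum_iff hsupp).2 hnodes).mul_left (N : ℂ)⁻¹
  refine this.congr_fun fun m => ?_
  rw [Function.comp_apply, if_pos (dvd_mul_left _ _)]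
  field_simp [Nat.cast_ne_zero.2 hN.ne']

theorem norm_integral_sub_trapezoid_le {T : ℝ} [hT : Fact (0 < T)] (G : C(AddCircle T, ℂ))
    {C a : ℝ} (ha : 0 < a) (hG : ∀ n : ℤ, ‖fourierCoeff G n‖ ≤ C * Real.exp (-a * |(n : ℝ)|))
    {N : ℕ} (hN : 0 < N) :
    ‖(∫ t in (0 : ℝ)..T, G t) -
        (T / N) * ∑ k ∈ range N, G ((T * (k + 1) / N : ℝ) : AddCircle T)‖ ≤
      2 * T * C / (Real.exp (a * N) - 1) := by
  have hint : ∫ t in (0 : ℝ)..T, G t = T * fourierCoeff G 0 := by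
    rw [fourierCoeff_eq_intervalIntegral G 0 0]
    simp [field, ofReal_ne_zero.2 hT.out.ne']
  have halias := hasSum_fourierCoeff_mul_natCast G (summable_of_norm_le_mul_exp_neg_abs ha hG) hN
  have hdecay : ∀ m : ℤ, ‖fourierCoeff G (m * N)‖ ≤ C * Real.exp (-(a * N) * |(m : ℝ)|) := by
    intro m
    simpa [abs_mul, mul_assoc, mul_comm, mul_left_comm] using hG (m * N)
  have hsplit : (∫ t in (0 : ℝ)..T, G t) -
      (T / N) * ∑ k ∈ range N, G ((T * (k + 1) / N : ℝ) : AddCircle T) =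
      -((T : ℂ) * (∑' m : ℤ, fourierCoeff G (m * N) - fourierCoeff G 0)) := by
    rw [halias.tsum_eq, hint]
    ring
  have htail := norm_tsum_sub_apply_zero_le (by positivity) hdecay
  rw [zero_mul] at htail
  rw [hsplit, norm_neg, norm_mul, norm_real, Real.norm_of_nonneg hT.out.le,
    show 2 * T * C / (Real.exp (a * N) - 1) = T * (2 * C / (Real.exp (a * N) - 1)) by ring]
  exact mul_le_mul_of_nonneg_left htail hT.out.le

theorem trapezoidal_rule_exponential_convergence_general
    (f : ℂ → ℂ) (α M : ℝ) (hα : 0 < α)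
    (hper : ∀ z : ℂ, f (z + 2*π) = f z)
    (hanal : DifferentiableOn ℂ f {z : ℂ | |z.im| < α})
    (hbound : ∀ z : ℂ, |z.im| < α → ‖f z‖ ≤ M)
    (N : ℕ) (hN : 0 < N) :
    ‖(∫ t in (0:ℝ)..(2*π), f t)
        - (2*π/N) * ∑ k ∈ Finset.range N, f (2*π*(k+1)/N)‖
      ≤ 4*π*M / (Real.exp (α*N) - 1) := by
  have hperR : Function.Periodic (fun t : ℝ => f t) (2 * π) := fun t => by simpa using hper t
  have hcont : Continuous fun t : ℝ => f t :=
    hanal.continuousOn.comp_continuous continuous_ofReal fun t => by simpa using hα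
  let G : C(AddCircle (2 * π), ℂ) := ⟨hperR.lift, hcont.quotient_liftOn' _⟩
  have hG : ∀ t : ℝ, G t = f t := hperR.lift_coe
  have key := norm_integral_sub_trapezoid_le G hα
    (norm_fourierCoeff_le_of_strip hα hper hanal hbound hG) hN
  simp only [hG] at key
  push_cast at key
  convert key using 2
  ring

theorem trapezoidal_rule_exponential_convergence
    (f : ℂ → ℂ) (α M : ℝ) (hα : 0 < α) (hM : 0 ≤ M)
    (hper : ∀ z : ℂ, f (z + 2*π) = f z)
    (hcont : ∀ α' : ℝ, α' < α → ContinuousOn f {z : ℂ | |z.im| ≤ α'})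
    (hanal : DifferentiableOn ℂ f {z : ℂ | |z.im| < α})
    (hbound : ∀ z : ℂ, |z.im| < α → ‖f z‖ ≤ M)
    (N : ℕ) (hN : 0 < N) :
    ‖(∫ t in (0:ℝ)..(2*π), f t)
        - (2*π/N) * ∑ k ∈ Finset.range N, f (2*π*(k+1)/N)‖
      ≤ 4*π*M / (Real.exp (α*N) - 1) :=
  trapezoidal_rule_exponential_convergence_general f α M hα hper hanal hbound N hN
end
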